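/- Let 2 < p < 6 and ω > 0. Then the squared L² norm of the soliton satisfies ∫_ℝ φ_ω(x)² dx = (p^{2/(p−2)} / ((p−2)·2^{(4−p)/(p−2)})) · ω^{(6−p)/(2(p−2))} · ∫_{−1}^{1} (1−t²)^{(4−p)/(p−2)} dt. In particular the function ω ↦ ∫_ℝ φ_ω² dx is a strictly increasing bijection of (0,∞) onto (0,∞). -/

import Mathlib

open Set

noncomputable section

/-- The NLS soliton at frequency `ω` for nonlinearity power `p`:
`φ_ω(x) = (ωp / (2 cosh²(((p−2)/2)√ω x)))^{1/(p−2)}`. -/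
def soliton (p ω : ℝ) (x : ℝ) : ℝ :=
  (ω * p / (2 * Real.cosh ((p - 2) / 2 * Real.sqrt ω * x) ^ 2)) ^ (1 / (p - 2))

/-!
Squaring the soliton gives `(ωp/2)^s · sech^{2s}(c x)` with `s = 2/(p−2)` and `c = (p−2)√ω/2`, so
rescaling `x` shows that the mass is a positive constant times `ω^{s−1/2} = ω^{(6−p)/(2(p−2))}`.
The substitution `t = tanh y`, for which `dt = sech² y dy` and `1 − t² = sech² y`, turns the
remaining integral of `sech^{2s}` into `∫_{−1}^{1} (1−t²)^{s−1} dt`; it is finite and positive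
because `sech` decays exponentially. Since `p < 6` makes the exponent of `ω` positive, the mass is
a strictly increasing bijection of `(0,∞)`.
-/

open Real MeasureTheory

theorem integrable_of_even_of_integrableOn_Ioi {E : Type*} [NormedAddCommGroup E] {f : ℝ → E}
    (heven : ∀ x, f (-x) = f x) (hf : IntegrableOn f (Ioi 0)) : Integrable f := by
  rw [← integrableOn_univ, ← Iio_union_Ici (a := (0 : ℝ)), integrableOn_union,
    integrableOn_Ici_iff_integrableOn_Ioi]
  refine ⟨?_, hf⟩
  rw [← (Measure.measurePreserving_neg (volume : Measure ℝ)).integrableOn_comp_preimage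
    (Homeomorph.neg ℝ).measurableEmbedding]
  simpa only [Function.comp_def, heven, neg_preimage, neg_Iio, neg_zero] using hf

namespace Real

theorem one_sub_tanh_sq (x : ℝ) : 1 - tanh x ^ 2 = (cosh x ^ 2)⁻¹ := by
  have := (cosh_pos x).ne'
  rw [tanh_eq_sinh_div_cosh]
  field_simp
  linarith [cosh_sq_sub_sinh_sq x]

theorem hasDerivAt_tanh (x : ℝ) : HasDerivAt tanh (cosh x ^ 2)⁻¹ x := by
  have h := (hasDerivAt_sinh x).div (hasDerivAt_cosh x) (cosh_pos x).ne'
  rw [show sinh / cosh = tanh from funext fun y => (tanh_eq_sinh_div_cosh y).symm] at h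
  refine h.congr_deriv ?_
  have := (cosh_pos x).ne'
  field_simp
  linarith [cosh_sq_sub_sinh_sq x]

theorem inv_cosh_sq_le (x : ℝ) : (cosh x ^ 2)⁻¹ ≤ 4 * exp (-(2 * x)) := by
  have hexp : exp x ≤ 2 * cosh x := by
    rw [cosh_eq]; linarith [(exp_pos (-x)).le]
  rw [show -(2 * x) = -x + -x by ring, exp_add, exp_neg]
  calc (cosh x ^ 2)⁻¹ ≤ ((exp x / 2) ^ 2)⁻¹ := by gcongr; linarith
    _ = 4 * ((exp x)⁻¹ * (exp x)⁻¹) := by ring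

theorem integrable_inv_cosh_sq_rpow {a : ℝ} (ha : 0 < a) :
    Integrable fun x : ℝ => (cosh x ^ 2)⁻¹ ^ a := by
  refine integrable_of_even_of_integrableOn_Ioi (fun x => by rw [cosh_neg]) ?_
  refine Integrable.mono' ((exp_neg_integrableOn_Ioi 0 (mul_pos two_pos ha)).const_mul (4 ^ a))
    (by fun_prop : Measurable _).aestronglyMeasurable (.of_forall fun x => ?_)
  rw [norm_of_nonneg (by positivity), show -(2 * a) * x = -(2 * x) * a by ring, exp_mul,
    ← mul_rpow (by norm_num) (exp_pos _).le]
  gcongr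
  exact inv_cosh_sq_le x

theorem integral_inv_cosh_sq_rpow_pos {a : ℝ} (ha : 0 < a) :
    0 < ∫ x : ℝ, (cosh x ^ 2)⁻¹ ^ a := by
  refine (integral_pos_iff_support_of_nonneg (fun x => by positivity)
    (integrable_inv_cosh_sq_rpow ha)).2 ?_
  rw [Function.support_eq_univ fun x => by positivity]
  simp

theorem integral_one_sub_sq_rpow_eq_integral_inv_cosh_sq_rpow (γ : ℝ) :
    ∫ t in (-1 : ℝ)..1, (1 - t ^ 2) ^ γ = ∫ x : ℝ, (cosh x ^ 2)⁻¹ ^ (γ + 1) := by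
  rw [intervalIntegral.integral_of_le (by norm_num), integral_Ioc_eq_integral_Ioo,
    ← tanh_bijOn.image_eq, integral_image_eq_integral_abs_deriv_smul MeasurableSet.univ
      (fun x _ => (hasDerivAt_tanh x).hasDerivWithinAt) tanh_injective.injOn, setIntegral_univ]
  congr 1 with x
  have hsech : 0 < (cosh x ^ 2)⁻¹ := by positivity
  rw [smul_eq_mul, abs_of_pos hsech, one_sub_tanh_sq, rpow_add hsech, rpow_one, mul_comm]

end Real

theorem soliton_sq {p ω : ℝ} (hp : 0 ≤ p) (hω : 0 ≤ ω) (x : ℝ) :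
    soliton p ω x ^ 2 =
      (ω * p / 2) ^ (2 / (p - 2)) * (cosh ((p - 2) / 2 * √ω * x) ^ 2)⁻¹ ^ (2 / (p - 2)) := by
  rw [soliton, ← div_div, div_eq_mul_inv _ (cosh _ ^ 2), ← rpow_natCast,
    ← rpow_mul (by positivity), mul_rpow (by positivity) (by positivity)]
  norm_num [div_eq_mul_inv, mul_comm]

theorem integral_soliton_sq {p ω : ℝ} (hp : 2 < p) (hω : 0 < ω) :
    ∫ x : ℝ, soliton p ω x ^ 2 =
      p ^ (2 / (p - 2)) / ((p - 2) * (2 : ℝ) ^ ((4 - p) / (p - 2))) *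
        ω ^ ((6 - p) / (2 * (p - 2))) * ∫ x : ℝ, (cosh x ^ 2)⁻¹ ^ (2 / (p - 2)) := by
  have hp2 : 0 < p - 2 := by linarith
  have hscale : 0 < (p - 2) / 2 * √ω := by positivity
  simp_rw [soliton_sq (by linarith : 0 ≤ p) hω.le]
  rw [integral_const_mul, Measure.integral_comp_mul_left (fun y => (cosh y ^ 2)⁻¹ ^ (2 / (p - 2))),
    smul_eq_mul, abs_of_pos (inv_pos.2 hscale), ← mul_assoc]
  congr 1
  rw [show (4 - p) / (p - 2) = 2 / (p - 2) - 1 by field_simp; ring,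
    show (6 - p) / (2 * (p - 2)) = 2 / (p - 2) - 1 / 2 by field_simp; ring,
    rpow_sub two_pos, rpow_sub hω, rpow_one, sqrt_eq_rpow, mul_div_assoc, mul_rpow hω.le
    (by positivity), div_rpow (by linarith) zero_le_two]
  field_simp

theorem strictMonoOn_const_mul_rpow {K β : ℝ} (hK : 0 < K) (hβ : 0 < β) :
    StrictMonoOn (fun w : ℝ => K * w ^ β) (Ioi 0) := fun _ ha _ _ hab =>
  mul_lt_mul_of_pos_left (rpow_lt_rpow (le_of_lt ha) hab hβ) hK

theorem bijOn_const_mul_rpow {K β : ℝ} (hK : 0 < K) (hβ : β ≠ 0) :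
    BijOn (fun w : ℝ => K * w ^ β) (Ioi 0) (Ioi 0) := by
  refine ⟨fun w hw => mul_pos hK (rpow_pos_of_pos hw β), fun a ha b hb hab => ?_,
    fun v hv => ⟨(v / K) ^ β⁻¹, rpow_pos_of_pos (div_pos hv hK) _, ?_⟩⟩
  · exact rpow_left_injOn hβ (mem_Ioi.1 ha).le (mem_Ioi.1 hb).le (mul_left_cancel₀ hK.ne' hab)
  · dsimp only
    rw [← rpow_mul (div_pos hv hK).le, inv_mul_cancel₀ hβ, rpow_one, mul_div_cancel₀ _ hK.ne']

theorem soliton_mass_formula (p ω : ℝ) (hp2 : 2 < p) (hp6 : p < 6) (hω : 0 < ω) :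
    (∫ x : ℝ, soliton p ω x ^ 2) =
      p ^ (2 / (p - 2)) / ((p - 2) * (2 : ℝ) ^ ((4 - p) / (p - 2))) *
        ω ^ ((6 - p) / (2 * (p - 2))) *
        ∫ t in (-1 : ℝ)..1, (1 - t ^ 2) ^ ((4 - p) / (p - 2)) ∧
    StrictMonoOn (fun w : ℝ => ∫ x : ℝ, soliton p w x ^ 2) (Ioi 0) ∧
    BijOn (fun w : ℝ => ∫ x : ℝ, soliton p w x ^ 2) (Ioi 0) (Ioi 0) := by
  have hp : 0 < p - 2 := by linarith
  have hexponent : (4 - p) / (p - 2) + 1 = 2 / (p - 2) := by field_simp; ring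
  have hβ : 0 < (6 - p) / (2 * (p - 2)) := div_pos (by linarith) (by positivity)
  set K := p ^ (2 / (p - 2)) / ((p - 2) * (2 : ℝ) ^ ((4 - p) / (p - 2))) *
    ∫ x : ℝ, (cosh x ^ 2)⁻¹ ^ (2 / (p - 2)) with hK_def
  have hK : 0 < K := by
    have := integral_inv_cosh_sq_rpow_pos (div_pos two_pos hp)
    positivity
  have hmass : EqOn (fun w => K * w ^ ((6 - p) / (2 * (p - 2))))
      (fun w : ℝ => ∫ x : ℝ, soliton p w x ^ 2) (Ioi 0) := fun w hw => by
    simp only [integral_soliton_sq hp2 hw, hK_def]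
    ring
  refine ⟨?_, hmass.congr_strictMonoOn.1 (strictMonoOn_const_mul_rpow hK hβ),
    (bijOn_const_mul_rpow hK hβ.ne').congr hmass⟩
  rw [integral_one_sub_sq_rpow_eq_integral_inv_cosh_sq_rpow, hexponent, integral_soliton_sq hp2 hω]

end
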